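/- arXiv:2003.12360 — 3 statements merged into one kernel-verified Lean document; each statement's English description precedes it below -/
import Mathlib

section
/- For a metric space X, trasdim X ≤ n (for n ∈ ℕ) if and only if asdim X ≤ n, where trasdim X = Ord A(X) with A(X) = {σ ∈ FinN : there are no uniformly bounded families U_i, i ∈ σ, such that each U_i is i-disjoint and ⋃_{i∈σ} U_i covers X}. -/
open Set Metric EMetric
open scoped ENNReal NNReal

noncomputable section

variable {α : Type*}

/-- Extended distance between two sets: `inf {d(x,y) : x ∈ s, y ∈ t}`. -/
def setD [PseudoEMetricSpace α] (s t : Set α) : ℝ≥0∞ := ⨅ x ∈ s, ⨅ y ∈ t, edist x y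

/-- A family of sets is `r`-disjoint if distinct members are at distance ≥ r. -/
def RDisjoint [PseudoEMetricSpace α] (r : ℝ) (𝒰 : Set (Set α)) : Prop :=
  ∀ U ∈ 𝒰, ∀ V ∈ 𝒰, U ≠ V → ENNReal.ofReal r ≤ setD U V

/-- A family is `R`-bounded if every member has diameter at most `R`. -/
def BoundedBy [PseudoEMetricSpace α] (R : ℝ) (𝒰 : Set (Set α)) : Prop :=
  ∀ U ∈ 𝒰, EMetric.diam U ≤ ENNReal.ofReal R

/-- A family is uniformly bounded if it is `R`-bounded for some `R`. -/
def UnifBounded [PseudoEMetricSpace α] (𝒰 : Set (Set α)) : Prop := ∃ R : ℝ, BoundedBy R 𝒰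

/-- `asdim X ≤ n`: for every `r > 0` there are `n+1` uniformly bounded `r`-disjoint
families whose union covers `X`. -/
def AsdimLE (X : Type*) [MetricSpace X] (n : ℕ) : Prop :=
  ∀ r : ℝ, 0 < r → ∃ 𝒰 : Fin (n + 1) → Set (Set X),
    (∀ k, RDisjoint r (𝒰 k) ∧ UnifBounded (𝒰 k)) ∧ (⋃ k, ⋃₀ 𝒰 k) = Set.univ

/-- The collection `A(X)` of finite nonempty subsets `σ ⊆ ℕ` such that there are NO
uniformly bounded families `𝒰 i` (`i ∈ σ`), each `i`-disjoint, whose union covers `X`. -/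
def AX (X : Type*) [MetricSpace X] : Set (Finset ℕ) :=
  {σ | σ.Nonempty ∧ ¬ ∃ 𝒰 : ℕ → Set (Set X),
    (∀ i ∈ σ, RDisjoint (i : ℝ) (𝒰 i) ∧ UnifBounded (𝒰 i)) ∧
    (⋃ i ∈ σ, ⋃₀ 𝒰 i) = Set.univ}

/-- `M^a = {τ ∈ FinN : τ ∪ {a} ∈ M, a ∉ τ}` (members of `FinN` are nonempty). -/
def derivSet (M : Set (Finset ℕ)) (a : ℕ) : Set (Finset ℕ) :=
  {τ | τ.Nonempty ∧ a ∉ τ ∧ insert a τ ∈ M}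

/-- `Ord M ≤ α`, defined inductively: `Ord ∅ ≤ α` for every `α`, and
`Ord M ≤ α` whenever for all `a ∈ ℕ` there is `β < α` with `Ord M^a ≤ β`. -/
inductive OrdLE : Set (Finset ℕ) → Ordinal.{0} → Prop
  | empty (α : Ordinal) : OrdLE ∅ α
  | step (M : Set (Finset ℕ)) (α : Ordinal) (β : ℕ → Ordinal)
      (hβ : ∀ a : ℕ, β a < α)
      (h : ∀ a : ℕ, OrdLE (derivSet M a) (β a)) : OrdLE M α

/-- `Ord M`: the least ordinal `α` with `Ord M ≤ α` (when one exists). -/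
def trOrd (M : Set (Finset ℕ)) : Ordinal := sInf {α | OrdLE M α}

/-- `U` is open in the subspace `S`. -/
def OpenIn [TopologicalSpace α] (S U : Set α) : Prop := ∃ V, IsOpen V ∧ U = V ∩ S

/-- `L` is a partition of `S` between `A` and `B`: `S = U ⊔ L ⊔ W` with `U, W`
open in `S`, `A ⊆ U`, `B ⊆ W`. -/
def PartitionBetween [TopologicalSpace α] (S A B L : Set α) : Prop :=
  ∃ U W : Set α, OpenIn S U ∧ OpenIn S W ∧ A ⊆ U ∧ B ⊆ W ∧
    S = U ∪ L ∪ W ∧ Disjoint U L ∧ Disjoint U W ∧ Disjoint L W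

/-- `L` is an `ε`-partition of `S` between `A` and `B`. -/
def EPartitionBetween [PseudoEMetricSpace α] (ε : ℝ) (S A B L : Set α) : Prop :=
  PartitionBetween S A B L ∧ ENNReal.ofReal ε < setD L A ∧ ENNReal.ofReal ε < setD L B

/-- The cube `[0,B]^n` in Euclidean space. -/
def cube (n : ℕ) (B : ℝ) : Set (EuclideanSpace ℝ (Fin n)) := {x | ∀ i, x i ∈ Set.Icc 0 B}

/-- The face `x_i = 0` of the cube `[0,B]^n`. -/
def faceNeg (n : ℕ) (B : ℝ) (i : Fin n) : Set (EuclideanSpace ℝ (Fin n)) :=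
  {x | x ∈ cube n B ∧ x i = 0}

/-- The face `x_i = B` of the cube `[0,B]^n`. -/
def facePos (n : ℕ) (B : ℝ) (i : Fin n) : Set (EuclideanSpace ℝ (Fin n)) :=
  {x | x ∈ cube n B ∧ x i = B}

/-- The number of coordinates of `x ∈ ℤ^d` not lying in `2^p ℤ`. -/
def badCount {d : ℕ} (x : Fin d → ℤ) (p : ℕ) : ℕ :=
  (Finset.univ.filter fun i => ¬ (2 : ℤ) ^ p ∣ x i).card

/-- The set of `x ∈ ℤ^d` satisfying, for each `(p, q)` in the list,
`|{i : x i ∉ 2^p ℤ}| ≤ q`.  Used to encode the spaces `X((p₁,…),(q₁,…))`. -/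
def XZ {d : ℕ} (cs : List (ℕ × ℕ)) : Set (Fin d → ℤ) :=
  {x | ∀ c ∈ cs, badCount x c.1 ≤ c.2}

end

/-
Every member of `A(X)` is nonempty, and for a collection `M` of nonempty sets `Ord M ≤ n` says exactly
that every member of `M` has at most `n` elements: passing from `M` to `M^a` removes `a` from each
member. If `asdim X ≤ n` and `|σ| > n`, then `n + 1` families that are `(max σ + 1)`-disjoint, placed
at `n + 1` indices of `σ`, show `σ ∉ A(X)`. Conversely, if no `σ` with `n + 1` elements lies in
`A(X)`, the families obtained for `σ = {⌈r⌉, …, ⌈r⌉ + n}` are all `r`-disjoint.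
-/

open Function

lemma OrdLE.card_le {M : Set (Finset ℕ)} {α : Ordinal} (h : OrdLE M α) {σ : Finset ℕ}
    (hσ : σ ∈ M) : (σ.card : Ordinal) ≤ α := by
  induction h generalizing σ with
  | empty => exact absurd hσ (Set.notMem_empty σ)
  | step M α β hβ _ ih =>
    obtain rfl | ⟨a, ha⟩ := σ.eq_empty_or_nonempty
    · simp
    rw [← Finset.card_erase_add_one ha, Nat.cast_succ]
    obtain hne | hempty := (σ.erase a).eq_empty_or_nonempty.symm
    · have hmem : σ.erase a ∈ derivSet M a :=
        ⟨hne, Finset.notMem_erase a σ, by rwa [Finset.insert_erase ha]⟩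
      exact Order.add_one_le_of_lt ((ih a hmem).trans_lt (hβ a))
    · rw [hempty, Finset.card_empty, Nat.cast_zero, zero_add, Order.one_le_iff_pos]
      exact zero_le.trans_lt (hβ a)

lemma ordLE_natCast_of_card_le {n : ℕ} {M : Set (Finset ℕ)}
    (hM : ∀ σ ∈ M, σ.Nonempty ∧ σ.card ≤ n) : OrdLE M n := by
  induction n generalizing M with
  | zero =>
    have hempty : M = ∅ := Set.eq_empty_of_forall_notMem fun σ hσ =>
      (hM σ hσ).1.card_ne_zero (Nat.le_zero.mp (hM σ hσ).2)
    exact hempty ▸ OrdLE.empty _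
  | succ n ih =>
    refine OrdLE.step M _ (fun _ => n) (fun _ => by exact_mod_cast n.lt_succ_self) fun a => ih ?_
    rintro τ ⟨hne, ha, hins⟩
    have hcard := (hM _ hins).2
    rw [Finset.card_insert_of_notMem ha] at hcard
    exact ⟨hne, Nat.succ_le_succ_iff.mp hcard⟩

theorem ordLE_natCast_iff {n : ℕ} {M : Set (Finset ℕ)} (hM : ∀ σ ∈ M, σ.Nonempty) :
    OrdLE M n ↔ ∀ σ ∈ M, σ.card ≤ n :=
  ⟨fun h σ hσ => by exact_mod_cast h.card_le hσ,
    fun h => ordLE_natCast_of_card_le fun σ hσ => ⟨hM σ hσ, h σ hσ⟩⟩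

section Covers

variable {X : Type*} [MetricSpace X]

lemma RDisjoint.of_le {r r' : ℝ} {𝒰 : Set (Set X)} (hU : RDisjoint r 𝒰) (h : r' ≤ r) :
    RDisjoint r' 𝒰 := fun U hU' V hV hne =>
  (ENNReal.ofReal_le_ofReal h).trans (hU U hU' V hV hne)

lemma rDisjoint_empty (r : ℝ) : RDisjoint r (∅ : Set (Set X)) :=
  fun _ hU => absurd hU (Set.notMem_empty _)

lemma unifBounded_empty : UnifBounded (∅ : Set (Set X)) :=
  ⟨0, fun _ hU => absurd hU (Set.notMem_empty _)⟩

variable (X) in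
def HasDisjointCover (σ : Finset ℕ) : Prop :=
  ∃ 𝒰 : ℕ → Set (Set X), (∀ i ∈ σ, RDisjoint (i : ℝ) (𝒰 i) ∧ UnifBounded (𝒰 i)) ∧
    (⋃ i ∈ σ, ⋃₀ 𝒰 i) = Set.univ

lemma mem_AX_iff {σ : Finset ℕ} : σ ∈ AX X ↔ σ.Nonempty ∧ ¬ HasDisjointCover X σ := Iff.rfl

lemma hasDisjointCover_of_injective {ι : Type*} {σ : Finset ℕ} (e : ι → ℕ) (he : Injective e)
    (heσ : ∀ k, e k ∈ σ) (𝒱 : ι → Set (Set X))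
    (h𝒱 : ∀ k, RDisjoint (e k : ℝ) (𝒱 k) ∧ UnifBounded (𝒱 k)) (hcov : (⋃ k, ⋃₀ 𝒱 k) = univ) :
    HasDisjointCover X σ := by
  refine ⟨extend e 𝒱 fun _ => ∅, fun i _ => ?_, ?_⟩
  · by_cases hi : ∃ k, e k = i
    · obtain ⟨k, rfl⟩ := hi
      rw [he.extend_apply]
      exact h𝒱 k
    · rw [extend_apply' _ _ _ hi]
      exact ⟨rDisjoint_empty _, unifBounded_empty⟩
  · refine Set.eq_univ_of_forall fun x => ?_
    obtain ⟨k, hk⟩ := Set.mem_iUnion.mp (hcov ▸ Set.mem_univ x)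
    exact Set.mem_iUnion₂.mpr ⟨e k, heσ k, by rwa [he.extend_apply]⟩

lemma HasDisjointCover.reindex {ι : Type*} {σ : Finset ℕ} (h : HasDisjointCover X σ)
    (e : ι → ℕ) (heσ : ∀ k, e k ∈ σ) (hσe : ∀ i ∈ σ, ∃ k, e k = i) :
    ∃ 𝒱 : ι → Set (Set X), (∀ k, RDisjoint (e k : ℝ) (𝒱 k) ∧ UnifBounded (𝒱 k)) ∧
      (⋃ k, ⋃₀ 𝒱 k) = univ := by
  obtain ⟨𝒰, h𝒰, hcov⟩ := h
  refine ⟨𝒰 ∘ e, fun k => h𝒰 _ (heσ k), Set.eq_univ_of_forall fun x => ?_⟩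
  obtain ⟨i, hi, hx⟩ := Set.mem_iUnion₂.mp (hcov ▸ Set.mem_univ x)
  obtain ⟨k, rfl⟩ := hσe i hi
  exact Set.mem_iUnion.mpr ⟨k, hx⟩

lemma AsdimLE.card_le_of_mem_AX {n : ℕ} (h : AsdimLE X n) {σ : Finset ℕ} (hσ : σ ∈ AX X) :
    σ.card ≤ n := by
  by_contra! hcard
  refine hσ.2 ?_
  let e : Fin (n + 1) → ℕ := fun k => σ.equivFin.symm (Fin.castLE hcard k)
  have he : Injective e :=
    Subtype.val_injective.comp (σ.equivFin.symm.injective.comp (Fin.castLE_injective hcard))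
  have heσ : ∀ k, e k ∈ σ := fun k => (σ.equivFin.symm _).2
  obtain ⟨𝒱, h𝒱, hcov⟩ := h ((σ.sup id : ℕ) + 1) (by positivity)
  refine hasDisjointCover_of_injective e he heσ 𝒱 (fun k => ⟨(h𝒱 k).1.of_le ?_, (h𝒱 k).2⟩) hcov
  have : e k ≤ σ.sup id := Finset.le_sup (f := id) (heσ k)
  exact (Nat.cast_le.mpr this).trans (le_add_of_nonneg_right zero_le_one)

lemma asdimLE_of_forall_mem_AX_card_le {n : ℕ} (h : ∀ σ ∈ AX X, σ.card ≤ n) : AsdimLE X n := by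
  intro r _
  let e : Fin (n + 1) → ℕ := fun k => ⌈r⌉₊ + k
  have he : Injective e := (add_right_injective _).comp Fin.val_injective
  set σ := Finset.univ.image e
  have hcard : σ.card = n + 1 := by
    rw [Finset.card_image_of_injective _ he, Finset.card_univ, Fintype.card_fin]
  have hcover : HasDisjointCover X σ := by
    by_contra hnot
    have := h σ ⟨Finset.card_pos.mp (by omega), hnot⟩
    omega
  obtain ⟨𝒱, h𝒱, hcov⟩ := hcover.reindex e (fun k => Finset.mem_image_of_mem e (Finset.mem_univ k))
    fun i hi => by simpa using Finset.mem_image.mp hi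
  refine ⟨𝒱, fun k => ⟨(h𝒱 k).1.of_le ?_, (h𝒱 k).2⟩, hcov⟩
  calc r ≤ ⌈r⌉₊ := Nat.le_ceil r
    _ ≤ (e k : ℝ) := by exact_mod_cast Nat.le_add_right _ _

end Covers

/-- For a metric space `X` and `n ∈ ℕ`, `trasdim X ≤ n` iff `asdim X ≤ n`. -/
theorem stmt2 (X : Type*) [MetricSpace X] (n : ℕ) :
    OrdLE (AX X) (n : Ordinal) ↔ AsdimLE X n := by
  rw [ordLE_natCast_iff fun σ hσ => (mem_AX_iff.mp hσ).1]
  exact ⟨asdimLE_of_forall_mem_AX_card_le, fun h σ hσ => h.card_le_of_mem_AX hσ⟩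
end

section
/- (Partition avoiding a disjoint family in a cube) Let L₀ = [0,B]^n for some B > 0, let F_k^+, F_k^- denote the pairs of opposite faces of L₀, and let 0 < ε < B/6. For each k = 1,…,n, if U_k is an ε-disjoint, (B/3)-bounded family of subsets of L_{k−1}, then there exists an ε-partition L_k of L_{k−1} between F_k^+ ∩ L_{k−1} and F_k^- ∩ L_{k−1} such that L_k ⊆ L_{k−1} ∩ (⋃U_k)^c. In particular, for the case k = 1: given an ε-disjoint (B/3)-bounded family U of subsets of [0,B]^n with 0 < ε < B/6, there is a closed set L ⊆ [0,B]^n disjoint from ⋃U, open sets U', W' with F_1^- ⊆ U', F_1^+ ⊆ W', [0,B]^n = U' ⊔ L ⊔ W', d(L, F_1^-) > ε and d(L, F_1^+) > ε. -/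
open Set Metric EMetric
open scoped ENNReal NNReal

/-!
Let `S` be the slab `{x_i ≥ B - 2ε}` of the cube and let `P` be `S` together with every member
of `𝒰` that comes within `ε/2` of `S`. Members have diameter at most `B/3`, so `P` stays inside
`{x_i ≥ 2B/3 - 5ε/2}`, and the level set `L = {d(·, P) = ε/2}` separates the face `x_i = 0` from
the face `x_i = B` with room to spare. It misses every member `V` of `𝒰`: either `V ⊆ P`, or `V`
stays more than `ε/2` away from `S` and, by `ε`-disjointness, at least `ε` away from the members
absorbed into `P`.
-/

theorem partitionBetween_inter_preimage_singleton {α : Type*} [TopologicalSpace α] {f : α → ℝ}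
    (hf : Continuous f) {S A B : Set α} {r : ℝ}
    (hA : A ⊆ S ∩ f ⁻¹' Ioi r) (hB : B ⊆ S ∩ f ⁻¹' Iio r) :
    PartitionBetween S A B (S ∩ f ⁻¹' {r}) := by
  refine ⟨S ∩ f ⁻¹' Ioi r, S ∩ f ⁻¹' Iio r, ⟨_, isOpen_Ioi.preimage hf, inter_comm _ _⟩,
    ⟨_, isOpen_Iio.preimage hf, inter_comm _ _⟩, hA, hB, ?_, ?_, ?_, ?_⟩
  · ext x
    simp only [mem_union, mem_inter_iff, mem_preimage, mem_Ioi, mem_Iio, mem_singleton_iff]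
    have := lt_trichotomy (f x) r
    tauto
  all_goals
    refine disjoint_left.2 fun x hx hx' => ?_
    simp only [mem_inter_iff, mem_preimage, mem_Ioi, mem_Iio, mem_singleton_iff] at hx hx'
    linarith [hx.2, hx'.2]

section MetricFamilies

variable {α : Type*} [PseudoMetricSpace α] {s t : Set α} {𝒰 : Set (Set α)} {U V : Set α}
  {x y : α}

theorem ofReal_le_setD {c : ℝ} (h : ∀ x ∈ s, ∀ y ∈ t, c ≤ dist x y) :
    ENNReal.ofReal c ≤ setD s t :=
  le_iInf₂ fun x hx => le_iInf₂ fun y hy => by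
    rw [edist_dist]
    exact ENNReal.ofReal_le_ofReal (h x hx y hy)

theorem RDisjoint.le_dist {r : ℝ} (h : RDisjoint r 𝒰) (hU : U ∈ 𝒰) (hV : V ∈ 𝒰) (hUV : U ≠ V)
    (hx : x ∈ U) (hy : y ∈ V) : r ≤ dist x y := by
  have := (h U hU V hV hUV).trans (iInf₂_le_of_le x hx (iInf₂_le y hy) : setD U V ≤ edist x y)
  rwa [edist_dist, ENNReal.ofReal_le_ofReal_iff dist_nonneg] at this

theorem BoundedBy.dist_le {R : ℝ} (h : BoundedBy R 𝒰) (hR : 0 ≤ R) (hU : U ∈ 𝒰) (hx : x ∈ U)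
    (hy : y ∈ U) : dist x y ≤ R := by
  have := (edist_le_ediam_of_mem hx hy).trans (h U hU)
  rwa [edist_dist, ENNReal.ofReal_le_ofReal_iff hR] at this

def absorb (𝒰 : Set (Set α)) (S : Set α) (r : ℝ) : Set α :=
  S ∪ ⋃₀ {U ∈ 𝒰 | ∃ u ∈ U, infDist u S ≤ r}

theorem subset_absorb (𝒰 : Set (Set α)) (S : Set α) (r : ℝ) : S ⊆ absorb 𝒰 S r :=
  subset_union_left

theorem infDist_absorb_ne {S : Set α} {r ε : ℝ} (h𝒰 : RDisjoint ε 𝒰) (hr : 0 < r)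
    (hrε : r < ε) (hS : S.Nonempty) (hV : V ∈ 𝒰) (hx : x ∈ V) :
    infDist x (absorb 𝒰 S r) ≠ r := by
  by_cases hVnear : ∃ u ∈ V, infDist u S ≤ r
  · rw [infDist_zero_of_mem (show x ∈ absorb 𝒰 S r from Or.inr ⟨V, ⟨hV, hVnear⟩, hx⟩)]
    exact hr.ne
  · have hxS : r < infDist x S := by
      push Not at hVnear
      exact hVnear x hx
    refine (lt_of_lt_of_le (lt_min hxS hrε) ?_).ne'
    refine (le_infDist (hS.mono (subset_absorb 𝒰 S r))).2 ?_
    rintro p (hp | ⟨U, ⟨hU, hUnear⟩, hpU⟩)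
    · exact (min_le_left _ _).trans (infDist_le_dist_of_mem hp)
    · refine (min_le_right _ _).trans (h𝒰.le_dist hV hU ?_ hx hpU)
      rintro rfl
      exact hVnear hUnear

end MetricFamilies

section Coordinates

variable {ι : Type*} [Fintype ι] {p : ℝ≥0∞} [Fact (1 ≤ p)]

theorem apply_sub_apply_le_dist (x y : PiLp p fun _ : ι => ℝ) (i : ι) :
    x i - y i ≤ dist x y :=
  (le_abs_self _).trans ((Real.dist_eq _ _).symm.le.trans (PiLp.dist_apply_le x y i))

theorem le_apply_add_infDist {P : Set (PiLp p fun _ : ι => ℝ)} (hP : P.Nonempty) {i : ι} {c : ℝ}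
    (hc : ∀ y ∈ P, c ≤ y i) (x : PiLp p fun _ : ι => ℝ) : c ≤ x i + infDist x P := by
  have : c - x i ≤ infDist x P := (le_infDist hP).2 fun y hy => by
    linarith [hc y hy, apply_sub_apply_le_dist y x i, dist_comm x y]
  linarith

theorem le_apply_of_mem_absorb {S : Set (PiLp p fun _ : ι => ℝ)}
    {𝒰 : Set (Set (PiLp p fun _ : ι => ℝ))} {i : ι} {c r R : ℝ} (hS : S.Nonempty)
    (hc : ∀ y ∈ S, c ≤ y i) (hr : 0 ≤ r) (h𝒰 : BoundedBy R 𝒰) (hR : 0 ≤ R)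
    {x : PiLp p fun _ : ι => ℝ} (hx : x ∈ absorb 𝒰 S r) : c - r - R ≤ x i := by
  rcases hx with hxS | ⟨U, ⟨hU, u, hu, huS⟩, hxU⟩
  · linarith [hc x hxS]
  · linarith [le_apply_add_infDist hS hc u, h𝒰.dist_le hR hU hu hxU, apply_sub_apply_le_dist u x i]

end Coordinates

theorem isClosed_cube (n : ℕ) (B : ℝ) : IsClosed (cube n B) := by
  simp only [cube, ofPred_forall]
  exact isClosed_iInter fun i => isClosed_Icc.preimage (by fun_prop)

theorem exists_isClosed_ePartitionBetween_faces_disjoint_sUnion {n : ℕ} {B ε : ℝ} (hε : 0 < ε)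
    (hεB : ε < B / 6) {𝒰 : Set (Set (EuclideanSpace ℝ (Fin n)))} (hdisj : RDisjoint ε 𝒰)
    (hbdd : BoundedBy (B / 3) 𝒰) (i : Fin n) :
    ∃ L, IsClosed L ∧ L ⊆ cube n B ∧ Disjoint L (⋃₀ 𝒰) ∧
      EPartitionBetween ε (cube n B) (faceNeg n B i) (facePos n B i) L := by
  set S := {x ∈ cube n B | B - 2 * ε ≤ x i}
  have hS : S.Nonempty :=
    ⟨WithLp.toLp 2 fun _ => B, fun _ => ⟨by linarith, le_rfl⟩, by simp only; linarith⟩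
  set P := absorb 𝒰 S (ε / 2)
  have hP : P.Nonempty := hS.mono (subset_absorb 𝒰 S _)
  have hP_lower : ∀ p ∈ P, B - 2 * ε - ε / 2 - B / 3 ≤ p i := fun p =>
    le_apply_of_mem_absorb hS (fun y hy => hy.2) (by linarith) hbdd (by linarith)
  have hL_lower : ∀ x, infDist x P = ε / 2 → 2 * B / 3 - 3 * ε ≤ x i := fun x hx => by
    linarith [le_apply_add_infDist hP hP_lower x]
  have hL_upper : ∀ x ∈ cube n B, infDist x P = ε / 2 → x i < B - 2 * ε := fun x hx hxP => by
    by_contra! hxS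
    rw [infDist_zero_of_mem (subset_absorb 𝒰 S _ ⟨hx, hxS⟩)] at hxP
    linarith
  refine ⟨cube n B ∩ (infDist · P) ⁻¹' {ε / 2},
    (isClosed_cube n B).inter (isClosed_singleton.preimage (continuous_infDist_pt P)),
    inter_subset_left, ?_,
    partitionBetween_inter_preimage_singleton (continuous_infDist_pt P) ?_ ?_, ?_, ?_⟩
  · refine disjoint_left.2 fun x hxL ⟨V, hV, hxV⟩ => ?_
    exact infDist_absorb_ne hdisj (by linarith) (by linarith) hS hV hxV hxL.2
  · rintro q ⟨hq, hq0⟩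
    refine ⟨hq, show ε / 2 < infDist q P from ?_⟩
    linarith [le_apply_add_infDist hP hP_lower q]
  · rintro q ⟨hq, hqB⟩
    refine ⟨hq, ?_⟩
    rw [mem_preimage, infDist_zero_of_mem (subset_absorb 𝒰 S _ ⟨hq, by linarith⟩)]
    exact half_pos hε
  · refine ((ENNReal.ofReal_lt_ofReal_iff (by linarith)).2 (by linarith : ε < 2 * B / 3 - 3 * ε)).trans_le
      (ofReal_le_setD fun x hx y hy => ?_)
    linarith [hL_lower x hx.2, apply_sub_apply_le_dist x y i, hy.2]
  · refine ((ENNReal.ofReal_lt_ofReal_iff (by linarith)).2 (by linarith : ε < 2 * ε)).trans_le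
      (ofReal_le_setD fun x hx y hy => ?_)
    linarith [hL_upper x hx.1 hx.2, apply_sub_apply_le_dist y x i, dist_comm x y, hy.2]

theorem stmt8_general (n : ℕ) (hn : 0 < n) (B ε : ℝ) (hε : 0 < ε) (hεB : ε < B / 6)
    (𝒰 : Set (Set (EuclideanSpace ℝ (Fin n))))
    (hdisj : RDisjoint ε 𝒰) (hbdd : BoundedBy (B / 3) 𝒰) :
    ∃ L U' W' : Set (EuclideanSpace ℝ (Fin n)),
      IsClosed L ∧ L ⊆ cube n B ∧ Disjoint L (⋃₀ 𝒰) ∧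
      OpenIn (cube n B) U' ∧ OpenIn (cube n B) W' ∧
      faceNeg n B ⟨0, hn⟩ ⊆ U' ∧ facePos n B ⟨0, hn⟩ ⊆ W' ∧
      cube n B = U' ∪ L ∪ W' ∧
      Disjoint U' L ∧ Disjoint U' W' ∧ Disjoint L W' ∧
      ENNReal.ofReal ε < setD L (faceNeg n B ⟨0, hn⟩) ∧
      ENNReal.ofReal ε < setD L (facePos n B ⟨0, hn⟩) := by
  obtain ⟨L, hL, hLcube, hLdisj, ⟨U', W', hU', hW', hnegU', hposW', hcover, hU'L, hU'W', hLW'⟩,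
    hneg, hpos⟩ := exists_isClosed_ePartitionBetween_faces_disjoint_sUnion hε hεB hdisj hbdd ⟨0, hn⟩
  exact ⟨L, U', W', hL, hLcube, hLdisj, hU', hW', hnegU', hposW', hcover, hU'L, hU'W', hLW', hneg,
    hpos⟩

/-- Partition of the cube avoiding an `ε`-disjoint `(B/3)`-bounded family (case `k = 1`):
there is a closed set `L ⊆ [0,B]^n` disjoint from `⋃𝒰`, and open (in the cube) sets
`U', W'` with `F₁⁻ ⊆ U'`, `F₁⁺ ⊆ W'`, `[0,B]^n = U' ⊔ L ⊔ W'`, and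
`d(L, F₁⁻) > ε`, `d(L, F₁⁺) > ε`. -/
theorem stmt8 (n : ℕ) (hn : 0 < n) (B ε : ℝ) (hB : 0 < B) (hε : 0 < ε) (hεB : ε < B / 6)
    (𝒰 : Set (Set (EuclideanSpace ℝ (Fin n))))
    (hsub : ∀ U ∈ 𝒰, U ⊆ cube n B)
    (hdisj : RDisjoint ε 𝒰) (hbdd : BoundedBy (B / 3) 𝒰) :
    ∃ L U' W' : Set (EuclideanSpace ℝ (Fin n)),
      IsClosed L ∧ L ⊆ cube n B ∧ Disjoint L (⋃₀ 𝒰) ∧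
      OpenIn (cube n B) U' ∧ OpenIn (cube n B) W' ∧
      faceNeg n B ⟨0, hn⟩ ⊆ U' ∧ facePos n B ⟨0, hn⟩ ⊆ W' ∧
      cube n B = U' ∪ L ∪ W' ∧
      Disjoint U' L ∧ Disjoint U' W' ∧ Disjoint L W' ∧
      ENNReal.ofReal ε < setD L (faceNeg n B ⟨0, hn⟩) ∧
      ENNReal.ofReal ε < setD L (facePos n B ⟨0, hn⟩) :=
  stmt8_general n hn B ε hε hεB 𝒰 hdisj hbdd
end

section
/- If L is a partition of [0,B]^n between the opposite faces F^+ and F^-, and Q is a cover of [0,B]^n by closed axis-parallel subcubes of side length s from a grid decomposition, then M = ⋃{Q ∈ Q : Q ∩ L ≠ ∅} is a partition of [0,B]^n between F^+ ∖ M and F^- ∖ M; moreover if L is a c-partition (c > 2s·√n), then M is a (c − 2s√n)-partition of [0,B]^n between F^+ and F^-. -/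
open Set Metric EMetric
open scoped ENNReal NNReal

/-!
Enlarging a partition `L` to a closed set `M ⊇ L` inside the cube keeps it a partition: shrink
the two open sides `U, W` to `U ∖ M, W ∖ M`. The union `M` of the grid cubes meeting `L` is such a
set (a finite union of closed cubes, containing `L` because the grid covers the cube), and every
point of `M` lies within the cube diameter `s√n` of a point of `L`. So distances from `M` to the
faces are at most `s√n` smaller than those from `L`; for a `c`-partition with `c ≥ s√n` this also
keeps `M` off the faces, so nothing has to be removed from them.
-/

section Partition

variable {α : Type*}

theorem PartitionBetween.subset [TopologicalSpace α] {S A B L : Set α}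
    (h : PartitionBetween S A B L) : L ⊆ S := by
  obtain ⟨U, W, -, -, -, -, hS, -⟩ := h
  rw [hS]
  exact subset_union_right.trans subset_union_left

theorem PartitionBetween.disjoint [TopologicalSpace α] {S A B L : Set α}
    (h : PartitionBetween S A B L) : Disjoint A B := by
  obtain ⟨U, W, -, -, hAU, hBW, -, -, hUW, -⟩ := h
  exact hUW.mono hAU hBW

theorem PartitionBetween.of_isClosed_superset [TopologicalSpace α] {S A B L M : Set α}
    (h : PartitionBetween S A B L) (hM : IsClosed M) (hLM : L ⊆ M) (hMS : M ⊆ S) :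
    PartitionBetween S (A \ M) (B \ M) M := by
  obtain ⟨U, W, ⟨V, hV, rfl⟩, ⟨V', hV', rfl⟩, hAU, hBW, hS, -, hUW, -⟩ := h
  refine ⟨(V ∩ S) \ M, (V' ∩ S) \ M, ⟨V ∩ Mᶜ, hV.inter hM.isOpen_compl, ?_⟩,
    ⟨V' ∩ Mᶜ, hV'.inter hM.isOpen_compl, ?_⟩, sdiff_subset_sdiff_left hAU,
    sdiff_subset_sdiff_left hBW, ?_, disjoint_sdiff_left,
    hUW.mono sdiff_subset sdiff_subset, disjoint_sdiff_right⟩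
  · ext; simp only [mem_sdiff, mem_inter_iff, mem_compl_iff]; tauto
  · ext; simp only [mem_sdiff, mem_inter_iff, mem_compl_iff]; tauto
  · refine Subset.antisymm (fun x hx => ?_) ?_
    · by_cases hxM : x ∈ M
      · exact Or.inl (Or.inr hxM)
      · rw [hS] at hx
        rcases hx with (hxU | hxL) | hxW
        · exact Or.inl (Or.inl ⟨hxU, hxM⟩)
        · exact absurd (hLM hxL) hxM
        · exact Or.inr ⟨hxW, hxM⟩
    · exact union_subset (union_subset (sdiff_subset.trans inter_subset_right) hMS)
        (sdiff_subset.trans inter_subset_right)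

end Partition

section SetDist

variable {α : Type*} [PseudoEMetricSpace α]

theorem setD_le_edist {s t : Set α} {x y : α} (hx : x ∈ s) (hy : y ∈ t) :
    setD s t ≤ edist x y :=
  (iInf₂_le x hx).trans (iInf₂_le y hy)

theorem disjoint_of_pos_setD {s t : Set α} (h : 0 < setD s t) : Disjoint s t :=
  disjoint_left.2 fun x hxs hxt => h.ne' <| nonpos_iff_eq_zero.1 <|
    (setD_le_edist hxs hxt).trans_eq (edist_self x)

theorem setD_le_add_of_forall_exists_edist_le {L M F : Set α} {r : ℝ≥0∞}
    (hML : ∀ x ∈ M, ∃ y ∈ L, edist x y ≤ r) : setD L F ≤ r + setD M F := by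
  rw [← tsub_le_iff_left]
  refine le_iInf₂ fun x hx => le_iInf₂ fun a ha => tsub_le_iff_left.2 ?_
  obtain ⟨y, hy, hxy⟩ := hML x hx
  calc setD L F ≤ edist y a := setD_le_edist hy ha
    _ ≤ edist y x + edist x a := edist_triangle _ _ _
    _ ≤ r + edist x a := by rw [edist_comm]; gcongr

theorem EPartitionBetween.mono {S A B L : Set α} {ε ε' : ℝ} (h : EPartitionBetween ε S A B L)
    (hε : ε' ≤ ε) : EPartitionBetween ε' S A B L :=
  ⟨h.1, (ENNReal.ofReal_le_ofReal hε).trans_lt h.2.1,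
    (ENNReal.ofReal_le_ofReal hε).trans_lt h.2.2⟩

theorem EPartitionBetween.of_isClosed_superset {S A B L M : Set α} {c r : ℝ}
    (h : EPartitionBetween c S A B L) (hM : IsClosed M) (hLM : L ⊆ M) (hMS : M ⊆ S)
    (hr : 0 ≤ r) (hrc : r ≤ c) (hML : ∀ x ∈ M, ∃ y ∈ L, edist x y ≤ ENNReal.ofReal r) :
    EPartitionBetween (c - r) S A B M := by
  obtain ⟨hpart, hLA, hLB⟩ := h
  have hgap : ∀ F, ENNReal.ofReal c < setD L F → ENNReal.ofReal (c - r) < setD M F := by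
    intro F hF
    rw [ENNReal.ofReal_sub _ hr]
    exact ENNReal.sub_lt_of_lt_add (ENNReal.ofReal_le_ofReal hrc)
      (hF.trans_le ((setD_le_add_of_forall_exists_edist_le hML).trans_eq (add_comm _ _)))
  have hMA := hgap A hLA
  have hMB := hgap B hLB
  have hpartM := hpart.of_isClosed_superset hM hLM hMS
  rw [(disjoint_of_pos_setD (hMA.trans_le' bot_le)).symm.sdiff_eq_left,
    (disjoint_of_pos_setD (hMB.trans_le' bot_le)).symm.sdiff_eq_left] at hpartM
  exact ⟨hpartM, hMA, hMB⟩

end SetDist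

section Grid

variable {n p : ℕ} {s : ℝ}

def gridCube (s : ℝ) (t : Fin n → ℕ) : Set (EuclideanSpace ℝ (Fin n)) :=
  {x | ∀ j, x j ∈ Icc (s * t j) (s * (t j + 1))}

def gridFattening (s : ℝ) (p : ℕ) (L : Set (EuclideanSpace ℝ (Fin n))) :
    Set (EuclideanSpace ℝ (Fin n)) :=
  ⋃₀ {Q | ∃ t : Fin n → ℕ, (∀ j, t j < p) ∧ Q = gridCube s t ∧ (Q ∩ L).Nonempty}

theorem isClosed_gridCube (s : ℝ) (t : Fin n → ℕ) : IsClosed (gridCube s t) := by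
  have : gridCube s t =
      ⋂ j, (EuclideanSpace.proj (𝕜 := ℝ) j) ⁻¹' Icc (s * t j) (s * (t j + 1)) := by
    ext x; simp [gridCube, EuclideanSpace.proj]
  rw [this]
  exact isClosed_iInter fun j => isClosed_Icc.preimage (EuclideanSpace.proj j).continuous

theorem dist_le_of_mem_gridCube (hs : 0 ≤ s) {t : Fin n → ℕ} {x y : EuclideanSpace ℝ (Fin n)}
    (hx : x ∈ gridCube s t) (hy : y ∈ gridCube s t) : dist x y ≤ s * Real.sqrt n := by
  have hcoord : ∀ j, dist (x j) (y j) ≤ s := fun j => by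
    obtain ⟨hx₁, hx₂⟩ := hx j
    obtain ⟨hy₁, hy₂⟩ := hy j
    exact Real.dist_eq _ _ ▸ abs_sub_le_iff.2 ⟨by linarith, by linarith⟩
  calc dist x y = Real.sqrt (∑ j, dist (x j) (y j) ^ 2) := EuclideanSpace.dist_eq x y
    _ ≤ Real.sqrt (∑ _j : Fin n, s ^ 2) := by gcongr with j; exact hcoord j
    _ = s * Real.sqrt n := by
      rw [Finset.sum_const, Finset.card_univ, Fintype.card_fin, nsmul_eq_mul,
        Real.sqrt_mul (Nat.cast_nonneg n), Real.sqrt_sq hs, mul_comm]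

theorem gridCube_subset_cube (hs : 0 ≤ s) {t : Fin n → ℕ} (ht : ∀ j, t j < p) :
    gridCube s t ⊆ cube n (s * p) := fun x hx j => by
  obtain ⟨hx₁, hx₂⟩ := hx j
  have htp : (t j : ℝ) + 1 ≤ p := by exact_mod_cast ht j
  exact ⟨le_trans (by positivity) hx₁, hx₂.trans (by gcongr)⟩

theorem exists_lt_mem_Icc_mul (hs : 0 < s) (hp : 0 < p) {x : ℝ} (hx : x ∈ Icc 0 (s * p)) :
    ∃ k < p, x ∈ Icc (s * k) (s * (k + 1)) := by
  obtain ⟨hx₀, hxp⟩ := hx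
  rcases hxp.lt_or_eq with hlt | rfl
  · have hk := Nat.floor_le (div_nonneg hx₀ hs.le)
    have hk' := Nat.lt_floor_add_one (x / s)
    refine ⟨⌊x / s⌋₊, ?_, ?_, ?_⟩
    · exact Nat.floor_lt (div_nonneg hx₀ hs.le) |>.2 ((div_lt_iff₀' hs).2 hlt)
    · exact (le_div_iff₀' hs).1 hk
    · exact ((div_lt_iff₀' hs).1 hk').le
  · refine ⟨p - 1, Nat.sub_lt hp one_pos, ?_, ?_⟩ <;>
      rw [Nat.cast_pred hp] <;> nlinarith

theorem exists_mem_gridCube (hs : 0 < s) (hp : 0 < p) {x : EuclideanSpace ℝ (Fin n)}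
    (hx : x ∈ cube n (s * p)) : ∃ t : Fin n → ℕ, (∀ j, t j < p) ∧ x ∈ gridCube s t := by
  choose t ht hxt using fun j => exists_lt_mem_Icc_mul hs hp (hx j)
  exact ⟨t, ht, hxt⟩

theorem isClosed_gridFattening (s : ℝ) (p : ℕ) (L : Set (EuclideanSpace ℝ (Fin n))) :
    IsClosed (gridFattening s p L) := by
  have hfin : (pi univ fun _ : Fin n => Iio p).Finite := Finite.pi fun _ => finite_Iio p
  rw [gridFattening, sUnion_eq_biUnion]
  refine ((hfin.image (gridCube s)).subset ?_).isClosed_biUnion ?_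
  · rintro Q ⟨t, ht, rfl, -⟩
    exact ⟨t, fun j _ => ht j, rfl⟩
  · rintro Q ⟨t, -, rfl, -⟩
    exact isClosed_gridCube s t

theorem gridFattening_subset_cube (hs : 0 ≤ s) (L : Set (EuclideanSpace ℝ (Fin n))) :
    gridFattening s p L ⊆ cube n (s * p) := by
  rintro x ⟨Q, ⟨t, ht, rfl, -⟩, hxQ⟩
  exact gridCube_subset_cube hs ht hxQ

theorem subset_gridFattening (hs : 0 < s) (hp : 0 < p) {L : Set (EuclideanSpace ℝ (Fin n))}
    (hL : L ⊆ cube n (s * p)) : L ⊆ gridFattening s p L := fun y hy => by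
  obtain ⟨t, ht, hyt⟩ := exists_mem_gridCube hs hp (hL hy)
  exact ⟨gridCube s t, ⟨t, ht, rfl, y, hyt, hy⟩, hyt⟩

theorem exists_edist_le_of_mem_gridFattening (hs : 0 ≤ s) {L : Set (EuclideanSpace ℝ (Fin n))}
    {x : EuclideanSpace ℝ (Fin n)} (hx : x ∈ gridFattening s p L) :
    ∃ y ∈ L, edist x y ≤ ENNReal.ofReal (s * Real.sqrt n) := by
  obtain ⟨Q, ⟨t, -, rfl, y, hyQ, hyL⟩, hxQ⟩ := hx
  exact ⟨y, hyL, edist_dist x y ▸ ENNReal.ofReal_le_ofReal (dist_le_of_mem_gridCube hs hxQ hyQ)⟩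

end Grid

/-- Fattening a partition of the cube by a grid of closed subcubes of side `s`:
`M = ⋃{Q ∈ 𝒬 : Q ∩ L ≠ ∅}` is a partition of `[0,B]^n` between `F⁺ ∖ M` and `F⁻ ∖ M`;
moreover, if `L` is a `c`-partition with `c > 2s√n`, then `M` is a `(c − 2s√n)`-partition
of `[0,B]^n` between `F⁺` and `F⁻`. -/
theorem stmt11 (n p : ℕ) (hn : 0 < n) (B s : ℝ) (hs : 0 < s) (hB : B = s * p)
    (L : Set (EuclideanSpace ℝ (Fin n)))
    (hL : PartitionBetween (cube n B) (facePos n B ⟨0, hn⟩) (faceNeg n B ⟨0, hn⟩) L)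
    (M : Set (EuclideanSpace ℝ (Fin n)))
    (hM : M = ⋃₀ {Q | ∃ t : Fin n → ℕ, (∀ j, t j < p) ∧
      Q = {x : EuclideanSpace ℝ (Fin n) | ∀ j, x j ∈ Set.Icc (s * t j) (s * (t j + 1))} ∧
      (Q ∩ L).Nonempty}) :
    PartitionBetween (cube n B) (facePos n B ⟨0, hn⟩ \ M) (faceNeg n B ⟨0, hn⟩ \ M) M ∧
    ∀ c : ℝ, 2 * s * Real.sqrt n < c →
      EPartitionBetween c (cube n B) (facePos n B ⟨0, hn⟩) (faceNeg n B ⟨0, hn⟩) L →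
      EPartitionBetween (c - 2 * s * Real.sqrt n) (cube n B)
        (facePos n B ⟨0, hn⟩) (faceNeg n B ⟨0, hn⟩) M := by
  change M = gridFattening s p L at hM
  subst hM hB
  -- for `p = 0` the cube is the single point `0`, which lies on both faces
  have hp : 0 < p := Nat.pos_of_ne_zero fun hp0 => by
    subst hp0
    have h0 : (0 : EuclideanSpace ℝ (Fin n)) ∈ cube n (s * (0 : ℕ)) := fun i => by simp
    exact hL.disjoint.ne_of_mem ⟨h0, by simp⟩ ⟨h0, rfl⟩ rfl
  have hclosed := isClosed_gridFattening s p L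
  have hLM := subset_gridFattening hs hp hL.subset
  have hMS := gridFattening_subset_cube hs.le (p := p) L
  refine ⟨hL.of_isClosed_superset hclosed hLM hMS, fun c hc hLc => ?_⟩
  have hsn : 0 ≤ s * Real.sqrt n := by positivity
  refine (hLc.of_isClosed_superset hclosed hLM hMS hsn (by linarith)
    fun x hx => exists_edist_le_of_mem_gridFattening hs.le hx).mono ?_
  linarith
end
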